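/- Let S = ⟨a_1,…,a_n⟩ ⊆ ℤ^m ⊕ T be a reduced monoid and let S̃ = ⟨(a_1,1),…,(a_n,1)⟩ ⊆ ℤ^{m+1} ⊕ T. Then: (1) L_S = ∅ if and only if the lattice ideal I_{S̃} is the zero ideal; (2) if I_{S̃} ≠ 0 and {g_1,…,g_s} is a binomial generating set of I_{S̃}, then L_S = (deg_S(g_1) + S) ∪ ⋯ ∪ (deg_S(g_s) + S). -/

import Mathlib

open MvPolynomial

/-- The `S`-degree of an exponent vector. -/
def degS {n : ℕ} {G : Type*} [AddCommMonoid G] (a : Fin n → G) (lam : Fin n → ℕ) : G :=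
  ∑ i, lam i • a i

/-- The lattice ideal of the monoid generated by `a`. -/
noncomputable def latticeIdeal (K : Type) [Field K] {n : ℕ} {G : Type*} [AddCommMonoid G]
    (a : Fin n → G) : Ideal (MvPolynomial (Fin n) K) :=
  Ideal.span {f | ∃ α β : Fin n →₀ ℕ, degS a ⇑α = degS a ⇑β ∧
    f = monomial α (1 : K) - monomial β 1}

/-- The set of elements of `S = ⟨a_1,…,a_n⟩` having at least two different factorizations
of the same length. -/
def LSet {n : ℕ} {G : Type*} [AddCommMonoid G] (a : Fin n → G) : Set G :=
  {x | ∃ lam nu : Fin n → ℕ, lam ≠ nu ∧ degS a lam = x ∧ degS a nu = x ∧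
    ∑ i, lam i = ∑ i, nu i}

/-!
Weighting `x_j` by `(a_j, 1)` records both the `S`-degree and the length of a factorization, so
the binomials of `I_{S̃}` are exactly the differences of two factorizations of equal length;
this gives (1). For (2), `L_S` is an ideal of `S` containing every `deg_S(g_i)`. Conversely, if
`x^λ - x^ν` witnesses `x ∈ L_S`, it lies in `(g_1,…,g_s)`, hence in the monomial ideal spanned by
the monomials of the `g_i`; so a monomial `x^γ` of some `g_i` divides `x^λ`, and
`x = deg_S(γ) + deg_S(λ - γ) = deg_S(g_i) + deg_S(λ - γ)`.
-/

section Binomial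

variable {K : Type} [Field K] {σ : Type*}

theorem monomial_one_sub_monomial_one_eq_zero_iff {α β : σ →₀ ℕ} :
    (monomial α (1 : K) - monomial β 1 = 0) ↔ α = β :=
  sub_eq_zero.trans (monomial_left_injective one_ne_zero).eq_iff

theorem mem_support_monomial_one_sub_monomial_one {α β : σ →₀ ℕ} (h : α ≠ β) :
    α ∈ (monomial α (1 : K) - monomial β 1).support := by
  classical
  simp [mem_support_iff, coeff_monomial, h.symm]

theorem exists_le_of_mem_support_of_mem_span_binomials {ι : Type*} {gα gβ : ι → σ →₀ ℕ}
    {f : MvPolynomial σ K}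
    (hf : f ∈ Ideal.span (Set.range fun i => monomial (gα i) (1 : K) - monomial (gβ i) 1))
    {μ : σ →₀ ℕ} (hμ : μ ∈ f.support) : ∃ i, gα i ≤ μ ∨ gβ i ≤ μ := by
  have hle : Ideal.span (Set.range fun i => monomial (gα i) (1 : K) - monomial (gβ i) 1) ≤
      Ideal.span ((fun s => monomial s (1 : K)) '' (Set.range gα ∪ Set.range gβ)) := by
    refine Ideal.span_le.2 ?_
    rintro _ ⟨i, rfl⟩
    exact sub_mem (Ideal.subset_span ⟨gα i, .inl ⟨i, rfl⟩, rfl⟩)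
      (Ideal.subset_span ⟨gβ i, .inr ⟨i, rfl⟩, rfl⟩)
  obtain ⟨_, ⟨i, rfl⟩ | ⟨i, rfl⟩, hi⟩ := mem_ideal_span_monomial_image.1 (hle hf) μ hμ
  exacts [⟨i, .inl hi⟩, ⟨i, .inr hi⟩]

end Binomial

section Degree

variable {n : ℕ} {G : Type*} [AddCommMonoid G] (a : Fin n → G)

theorem degS_add (α β : Fin n → ℕ) : degS a (α + β) = degS a α + degS a β := by
  simp [degS, add_smul, Finset.sum_add_distrib]

theorem degS_eq_add_of_le {μ ν : Fin n →₀ ℕ} (h : μ ≤ ν) :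
    degS a ν = degS a μ + degS a ⇑(ν - μ) := by
  rw [← degS_add, ← Finsupp.coe_add, add_tsub_cancel_of_le h]

theorem mem_closure_range_iff_exists_degS {x : G} :
    x ∈ AddSubmonoid.closure (Set.range a) ↔ ∃ μ : Fin n → ℕ, degS a μ = x := by
  rw [AddSubmonoid.mem_closure_range_iff]
  exact Finsupp.equivFunOnFinite.exists_congr fun μ => by
    simp [degS, Finsupp.sum_fintype, eq_comm]

theorem degS_prod_one (α : Fin n → ℕ) :
    degS (fun j => (a j, (1 : ℤ))) α = (degS a α, ((∑ i, α i : ℕ) : ℤ)) := by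
  simp [degS, Prod.ext_iff, Prod.fst_sum, Prod.snd_sum]

theorem degS_prod_one_eq_iff {α β : Fin n → ℕ} :
    degS (fun j => (a j, (1 : ℤ))) α = degS (fun j => (a j, (1 : ℤ))) β ↔
      degS a α = degS a β ∧ ∑ i, α i = ∑ i, β i := by
  simp only [degS_prod_one, Prod.mk.injEq, Nat.cast_inj]

end Degree

section LSet

variable {n : ℕ} {G : Type*} [AddCommMonoid G] (a : Fin n → G)

theorem mem_LSet_iff {x : G} :
    x ∈ LSet a ↔ ∃ α β : Fin n →₀ ℕ, α ≠ β ∧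
      degS (fun j => (a j, (1 : ℤ))) α = degS (fun j => (a j, (1 : ℤ))) β ∧ degS a α = x := by
  constructor
  · rintro ⟨lam, nu, hne, rfl, hnu, hsum⟩
    refine ⟨Finsupp.equivFunOnFinite.symm lam, Finsupp.equivFunOnFinite.symm nu,
      Finsupp.equivFunOnFinite.symm.injective.ne hne, ?_, rfl⟩
    simpa [degS_prod_one_eq_iff] using ⟨hnu.symm, hsum⟩
  · rintro ⟨α, β, hne, hdeg, rfl⟩
    obtain ⟨hdeg, hsum⟩ := (degS_prod_one_eq_iff a).1 hdeg
    exact ⟨α, β, DFunLike.coe_injective.ne hne, rfl, hdeg.symm, hsum⟩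

theorem LSet_eq_empty_iff :
    LSet a = ∅ ↔ ∀ α β : Fin n →₀ ℕ,
      degS (fun j => (a j, (1 : ℤ))) α = degS (fun j => (a j, (1 : ℤ))) β → α = β := by
  simp only [Set.eq_empty_iff_forall_notMem, mem_LSet_iff]
  constructor
  · intro h α β hdeg
    by_contra hne
    exact h _ ⟨α, β, hne, hdeg, rfl⟩
  · rintro h x ⟨α, β, hne, hdeg, -⟩
    exact hne (h α β hdeg)

theorem add_mem_LSet {x y : G} (hx : x ∈ LSet a) (hy : y ∈ AddSubmonoid.closure (Set.range a)) :
    x + y ∈ LSet a := by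
  obtain ⟨lam, nu, hne, rfl, hnu, hsum⟩ := hx
  obtain ⟨μ, rfl⟩ := (mem_closure_range_iff_exists_degS a).1 hy
  refine ⟨lam + μ, nu + μ, fun h => hne (add_right_cancel h), degS_add .., ?_, ?_⟩
  · rw [degS_add, hnu]
  · simp only [Pi.add_apply, Finset.sum_add_distrib, hsum]

end LSet

theorem latticeIdeal_eq_bot_iff (K : Type) [Field K] {n : ℕ} {G : Type*} [AddCommMonoid G]
    (a : Fin n → G) :
    latticeIdeal K a = ⊥ ↔ ∀ α β : Fin n →₀ ℕ, degS a α = degS a β → α = β := by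
  rw [latticeIdeal, Ideal.span_eq_bot]
  constructor
  · intro h α β hdeg
    exact monomial_one_sub_monomial_one_eq_zero_iff.1 (h _ ⟨α, β, hdeg, rfl⟩)
  · rintro h _ ⟨α, β, hdeg, rfl⟩
    rw [h α β hdeg, sub_self]

theorem binomial_mem_latticeIdeal (K : Type) [Field K] {n : ℕ} {G : Type*} [AddCommMonoid G]
    {a : Fin n → G} {α β : Fin n →₀ ℕ} (h : degS a α = degS a β) :
    monomial α (1 : K) - monomial β 1 ∈ latticeIdeal K a :=
  Ideal.subset_span ⟨α, β, h, rfl⟩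

theorem LSet_eq_of_span_binomials_eq_latticeIdeal (K : Type) [Field K] {n : ℕ} {G : Type*}
    [AddCommMonoid G] (a : Fin n → G) {s : ℕ} {gα gβ : Fin s → (Fin n →₀ ℕ)}
    (hne : ∀ i, gα i ≠ gβ i)
    (hdeg : ∀ i, degS (fun j => (a j, (1 : ℤ))) ⇑(gα i) = degS (fun j => (a j, (1 : ℤ))) ⇑(gβ i))
    (hspan : Ideal.span (Set.range fun i => monomial (gα i) (1 : K) - monomial (gβ i) 1) =
      latticeIdeal K (fun j => (a j, (1 : ℤ)))) :
    LSet a = {x | ∃ i : Fin s, ∃ y ∈ AddSubmonoid.closure (Set.range a),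
      x = degS a ⇑(gα i) + y} := by
  ext x
  constructor
  · intro hx
    obtain ⟨α, β, hαβ, hdegαβ, rfl⟩ := (mem_LSet_iff a).1 hx
    have hmem := binomial_mem_latticeIdeal K hdegαβ
    rw [← hspan] at hmem
    obtain ⟨i, hle | hle⟩ := exists_le_of_mem_support_of_mem_span_binomials hmem
      (mem_support_monomial_one_sub_monomial_one hαβ)
    · exact ⟨i, _, (mem_closure_range_iff_exists_degS a).2 ⟨_, rfl⟩, degS_eq_add_of_le a hle⟩
    · have hdegS : degS a (gβ i) = degS a (gα i) := ((degS_prod_one_eq_iff a).1 (hdeg i)).1.symm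
      refine ⟨i, _, (mem_closure_range_iff_exists_degS a).2 ⟨⇑(α - gβ i), rfl⟩, ?_⟩
      rw [degS_eq_add_of_le a hle, hdegS]
  · rintro ⟨i, y, hy, rfl⟩
    exact add_mem_LSet a ((mem_LSet_iff a).2 ⟨gα i, gβ i, hne i, hdeg i, rfl⟩) hy

theorem LSet_eq_union_degS_add_general
    {m n : ℕ} {T : Type} [AddCommGroup T]
    (K : Type) [Field K]
    (a : Fin n → (Fin m → ℤ) × T) :
    (LSet a = ∅ ↔
      latticeIdeal K (fun i => ((a i, (1 : ℤ)) : ((Fin m → ℤ) × T) × ℤ)) = ⊥)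
    ∧ (∀ (s : ℕ) (gα gβ : Fin s → (Fin n →₀ ℕ)),
        -- `g_i = x^{gα i} - x^{gβ i}` is a (nonzero) binomial of `I_{S̃}`,
        -- with `S`-degree `deg_S(g_i) = degS a (gα i)`:
        (∀ i, gα i ≠ gβ i) →
        (∀ i, degS (fun j => ((a j, (1 : ℤ)) : ((Fin m → ℤ) × T) × ℤ)) ⇑(gα i) =
              degS (fun j => ((a j, (1 : ℤ)) : ((Fin m → ℤ) × T) × ℤ)) ⇑(gβ i)) →
        -- `{g_1,…,g_s}` generates `I_{S̃}`:
        Ideal.span (Set.range fun i => monomial (gα i) (1 : K) - monomial (gβ i) 1) =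
          latticeIdeal K (fun j => ((a j, (1 : ℤ)) : ((Fin m → ℤ) × T) × ℤ)) →
        latticeIdeal K (fun j => ((a j, (1 : ℤ)) : ((Fin m → ℤ) × T) × ℤ)) ≠ ⊥ →
        LSet a = {x | ∃ i : Fin s, ∃ y ∈ AddSubmonoid.closure (Set.range a),
          x = degS a ⇑(gα i) + y}) :=
  ⟨(LSet_eq_empty_iff a).trans (latticeIdeal_eq_bot_iff K _).symm,
    fun _ _ _ hne hdeg hspan _ => LSet_eq_of_span_binomials_eq_latticeIdeal K a hne hdeg hspan⟩

/-- **Proposition.** Let `S = ⟨a_1,…,a_n⟩ ⊆ ℤ^m ⊕ T` be a reduced monoid and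
`S̃ = ⟨(a_1,1),…,(a_n,1)⟩`.  (1) `L_S = ∅` iff `I_{S̃} = 0`; (2) if `I_{S̃} ≠ 0`
and `{g_1,…,g_s}` is a binomial generating set of `I_{S̃}`, then
`L_S = (deg_S g_1 + S) ∪ ⋯ ∪ (deg_S g_s + S)`. -/
theorem LSet_eq_union_degS_add
    {m n : ℕ} {T : Type} [AddCommGroup T] [Fintype T]
    (K : Type) [Field K]
    (a : Fin n → (Fin m → ℤ) × T)
    -- `S` is reduced:
    (hred : ∀ x, x ∈ AddSubmonoid.closure (Set.range a) →
      -x ∈ AddSubmonoid.closure (Set.range a) → x = 0)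
    -- `a` is the minimal set of generators:
    (hmin : ∀ i, a i ∉ AddSubmonoid.closure (Set.range a \ {a i})) :
    (LSet a = ∅ ↔
      latticeIdeal K (fun i => ((a i, (1 : ℤ)) : ((Fin m → ℤ) × T) × ℤ)) = ⊥)
    ∧ (∀ (s : ℕ) (gα gβ : Fin s → (Fin n →₀ ℕ)),
        -- `g_i = x^{gα i} - x^{gβ i}` is a (nonzero) binomial of `I_{S̃}`,
        -- with `S`-degree `deg_S(g_i) = degS a (gα i)`:
        (∀ i, gα i ≠ gβ i) →
        (∀ i, degS (fun j => ((a j, (1 : ℤ)) : ((Fin m → ℤ) × T) × ℤ)) ⇑(gα i) =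
              degS (fun j => ((a j, (1 : ℤ)) : ((Fin m → ℤ) × T) × ℤ)) ⇑(gβ i)) →
        -- `{g_1,…,g_s}` generates `I_{S̃}`:
        Ideal.span (Set.range fun i => monomial (gα i) (1 : K) - monomial (gβ i) 1) =
          latticeIdeal K (fun j => ((a j, (1 : ℤ)) : ((Fin m → ℤ) × T) × ℤ)) →
        latticeIdeal K (fun j => ((a j, (1 : ℤ)) : ((Fin m → ℤ) × T) × ℤ)) ≠ ⊥ →
        LSet a = {x | ∃ i : Fin s, ∃ y ∈ AddSubmonoid.closure (Set.range a),
          x = degS a ⇑(gα i) + y}) :=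
  LSet_eq_union_degS_add_general K a
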